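/- (a) For every p⁰ ∈ Δ(K_A×K_B), NR_A(p⁰_A) × NR_B(p⁰_B) ⊆ 𝒩ℛ(p⁰). (b) If p⁰ lies in the interior of Δ(K_A×K_B) (i.e., p⁰ has full support K_A×K_B), then 𝒩ℛ(p⁰) = NR_A(p⁰_A) × NR_B(p⁰_B). -/
import Mathlib


open scoped BigOperators
open Finset

noncomputable section

/-- Value of the zero-sum matrix game with payoff matrix `M`:
`min_{t ∈ Δ(J)} max_{s ∈ Δ(I)} s M t`. -/
def matrixValue {I J : Type*} [Fintype I] [Fintype J] (M : I → J → ℝ) : ℝ :=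
  ⨅ t : (stdSimplex ℝ J), ⨆ s : (stdSimplex ℝ I),
    ∑ i, ∑ j, (s : I → ℝ) i * M i j * (t : J → ℝ) j

/-- The non-revealing value function `v^e(q)`, defined on all of `ℝ^K`. -/
def ve {K I J : Type*} [Fintype K] [Fintype I] [Fintype J]
    (M : K → I → J → ℝ) (q : K → ℝ) : ℝ :=
  matrixValue (fun i j => ∑ k, q k * M k i j)

/-- The concavification `Cav(v)(p)`: pointwise smallest concave majorant of `v` on the simplex. -/
def cav {K : Type*} [Fintype K] (v : (K → ℝ) → ℝ) (p : K → ℝ) : ℝ :=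
  sInf { y : ℝ | ∃ g : (K → ℝ) → ℝ,
    ConcaveOn ℝ (stdSimplex ℝ K) g ∧ (∀ q ∈ stdSimplex ℝ K, v q ≤ g q) ∧ y = g p }

/-- The affine parametrization `T : ℝ^{|K|-1} → ℝ^K`, `T 0 = e₁`, `T eᵢ = e_{i+1}`. -/
def Tmap (n : ℕ) (x : Fin n → ℝ) : Fin (n + 1) → ℝ :=
  Fin.cons (1 - ∑ i, x i) x

/-- The inverse of `T` on the affine hull of the simplex. -/
def Tinv {n : ℕ} (p : Fin (n + 1) → ℝ) : Fin n → ℝ := fun i => p i.succ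

/-- Pre-multiplication of the matrix `S` (linear part of `T`) by the row vector `φ`. -/
def rowS (n : ℕ) (φ : Fin (n + 1) → ℝ) : Fin n → ℝ := fun i => φ i.succ - φ 0

/-- Gradient of `f : ℝⁿ → ℝ` as a vector. -/
def grad {n : ℕ} (f : (Fin n → ℝ) → ℝ) (x : Fin n → ℝ) : Fin n → ℝ :=
  fun i => fderiv ℝ f x (Pi.single i 1)

/-- Clarke generalized gradient of `f` at `x`. -/
def clarkeGrad {n : ℕ} (f : (Fin n → ℝ) → ℝ) (x : Fin n → ℝ) : Set (Fin n → ℝ) :=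
  convexHull ℝ { L : Fin n → ℝ | ∃ u : ℕ → Fin n → ℝ,
    (∀ m, DifferentiableAt ℝ f (u m)) ∧
    Filter.Tendsto u Filter.atTop (nhds x) ∧
    Filter.Tendsto (fun m => grad f (u m)) Filter.atTop (nhds L) }

/-- The restricted superdifferential `∂*Cav(v)(p)`. -/
def restrictedSuperdiff {n : ℕ} (Cv : (Fin (n + 1) → ℝ) → ℝ) (p : Fin (n + 1) → ℝ) :
    Set (Fin n → ℝ) :=
  { w | ∀ h : Fin n → ℝ, Tmap n (Tinv p + h) ∈ stdSimplex ℝ (Fin (n + 1)) →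
      Cv (Tmap n (Tinv p + h)) ≤ Cv p + ∑ i, w i * h i }

/-- Property `NR` at `p⁰`. -/
def propNR {n : ℕ} {I J : Type*} [Fintype I] [Fintype J]
    (M : Fin (n + 1) → I → J → ℝ) (p0 : Fin (n + 1) → ℝ) : Prop :=
  ∃ p ∈ stdSimplex ℝ (Fin (n + 1)), ∃ φ : Fin (n + 1) → ℝ,
    (cav (ve M) p = ve M p ∧ ve M p = ∑ k, φ k * p k ∧
      cav (ve M) p0 = ∑ k, φ k * p0 k) ∧
    rowS n φ ∈ clarkeGrad (fun x => ve M (Tmap n x)) (Tinv p) ∧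
    rowS n φ ∈ restrictedSuperdiff (cav (ve M)) p

/-- The set `F` of feasible payoff vectors. -/
def Fset {K I J : Type*} [Fintype K] [Fintype I] [Fintype J]
    (M : K → I → J → ℝ) : Set (K → ℝ) :=
  convexHull ℝ { w : K → ℝ | ∃ i : I, ∃ j : J, w = fun k => M k i j }

/-- The set of non-revealing equilibrium payoffs `NR(p⁰)`. -/
def NRset {K I J : Type*} [Fintype K] [Fintype I] [Fintype J]
    (M : K → I → J → ℝ) (p0 : K → ℝ) : Set (K → ℝ) :=
  { φ | (∀ q ∈ stdSimplex ℝ K, ve M q ≤ ∑ k, φ k * q k) ∧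
        (∑ k, φ k * p0 k = cav (ve M) p0) ∧ φ ∈ Fset M }

/-- The game is locally non-revealing at `p`. -/
def locallyNR {K I J : Type*} [Fintype K] [Fintype I] [Fintype J]
    (M : K → I → J → ℝ) (p : K → ℝ) : Prop :=
  ∃ m : ℕ, ∃ α : Fin m → ℝ, ∃ ps : Fin m → K → ℝ,
    (∀ i, 0 < α i) ∧ (∑ i, α i = 1) ∧ (∀ i, ps i ∈ stdSimplex ℝ K) ∧
    (∑ i, α i • ps i = p) ∧ (cav (ve M) p = ∑ i, α i * ve M (ps i)) ∧
    (∃ i₀, ∀ k, 0 < ps i₀ k)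

end

noncomputable section

/-- Marginal on `K_A` of a vector indexed by `K_A × K_B`. -/
def margA {KA KB : Type*} [Fintype KB] (q : KA × KB → ℝ) : KA → ℝ :=
  fun a => ∑ b, q (a, b)

/-- Marginal on `K_B` of a vector indexed by `K_A × K_B`. -/
def margB {KA KB : Type*} [Fintype KA] (q : KA × KB → ℝ) : KB → ℝ :=
  fun b => ∑ a, q (a, b)

/-- The set `𝒩ℛ(p⁰)` of non-revealing equilibrium payoffs of the three-player game:
(1) feasibility, (2) individual rationality for player 1 (against `h(q)=v_A(q_A)+v_B(q_B)`
on distributions supported in `supp(p⁰)`), (3) individual rationality for players 2, 3. -/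
def bigNR {KA KB IA JA IB JB : Type*} [Fintype KA] [Fintype KB]
    [Fintype IA] [Fintype JA] [Fintype IB] [Fintype JB]
    (A : KA → IA → JA → ℝ) (B : KB → IB → JB → ℝ) (p0 : KA × KB → ℝ) :
    Set ((KA → ℝ) × (KB → ℝ)) :=
  { φ | (φ.1 ∈ Fset A ∧ φ.2 ∈ Fset B) ∧
    (∀ q : KA × KB → ℝ, q ∈ stdSimplex ℝ (KA × KB) → (∀ k, p0 k = 0 → q k = 0) →
      ve A (margA q) + ve B (margB q) ≤ ∑ k, q k * (φ.1 k.1 + φ.2 k.2)) ∧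
    (∑ a, φ.1 a * margA p0 a ≤ cav (ve A) (margA p0) ∧
     ∑ b, φ.2 b * margB p0 b ≤ cav (ve B) (margB p0)) }

end


noncomputable section helperlemmas
variable {K I J : Type*} [Fintype K] [Fintype I] [Fintype J]

lemma margA_mem {KA KB : Type*} [Fintype KA] [Fintype KB] {q : KA × KB → ℝ}
    (hq : q ∈ stdSimplex ℝ (KA × KB)) : margA q ∈ stdSimplex ℝ KA := by
  refine ⟨fun a => Finset.sum_nonneg fun b _ => hq.1 (a, b), ?_⟩
  rw [← hq.2, Fintype.sum_prod_type]; rfl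

lemma margB_mem {KA KB : Type*} [Fintype KA] [Fintype KB] {q : KA × KB → ℝ}
    (hq : q ∈ stdSimplex ℝ (KA × KB)) : margB q ∈ stdSimplex ℝ KB := by
  refine ⟨fun b => Finset.sum_nonneg fun a _ => hq.1 (a, b), ?_⟩
  rw [← hq.2, Fintype.sum_prod_type_right]; rfl

lemma sum_prod_split {KA KB : Type*} [Fintype KA] [Fintype KB]
    (q : KA × KB → ℝ) (φ1 : KA → ℝ) (φ2 : KB → ℝ) :
    ∑ k, q k * (φ1 k.1 + φ2 k.2)
      = (∑ a, φ1 a * margA q a) + (∑ b, φ2 b * margB q b) := by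
  simp only [margA, margB, Finset.mul_sum]
  rw [Fintype.sum_prod_type]
  have h2 : (∑ b : KB, ∑ a : KA, φ2 b * q (a, b)) = ∑ a : KA, ∑ b : KB, φ2 b * q (a, b) :=
    Finset.sum_comm
  rw [h2, ← Finset.sum_add_distrib]
  refine Finset.sum_congr rfl fun a _ => ?_
  rw [← Finset.sum_add_distrib]
  refine Finset.sum_congr rfl fun b _ => ?_
  ring

lemma concave_affine {K : Type*} [Fintype K] (φ : K → ℝ) (c : ℝ) :
    ConcaveOn ℝ (stdSimplex ℝ K) (fun q => (∑ k, φ k * q k) + c) := by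
  refine ⟨convex_stdSimplex ℝ K, ?_⟩
  intro x _ y _ a b ha hb hab
  have : ∑ k, φ k * (a • x + b • y) k = a * ∑ k, φ k * x k + b * ∑ k, φ k * y k := by
    simp only [Pi.add_apply, Pi.smul_apply, smul_eq_mul, Finset.mul_sum,
      ← Finset.sum_add_distrib]
    apply Finset.sum_congr rfl; intros; ring
  simp only [smul_eq_mul]
  rw [this]
  have hc : a * c + b * c = c := by rw [← add_mul, hab, one_mul]
  nlinarith [hc]

lemma cav_le_affine {K : Type*} [Fintype K] (v : (K → ℝ) → ℝ) (φ : K → ℝ) (c : ℝ)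
    {p : K → ℝ} (hp : p ∈ stdSimplex ℝ K)
    (h : ∀ q ∈ stdSimplex ℝ K, v q ≤ (∑ k, φ k * q k) + c) :
    cav v p ≤ (∑ k, φ k * p k) + c := by
  apply csInf_le
  · refine ⟨v p, ?_⟩
    rintro y ⟨g, _, hmaj, rfl⟩
    exact hmaj p hp
  · exact ⟨fun q => (∑ k, φ k * q k) + c, concave_affine φ c, h, rfl⟩

lemma abs_pairing_le {N : I → J → ℝ} {C : ℝ}
    (hC : ∀ i j, |N i j| ≤ C) {s : I → ℝ} {t : J → ℝ}
    (hs : s ∈ stdSimplex ℝ I) (ht : t ∈ stdSimplex ℝ J) :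
    |∑ i, ∑ j, s i * N i j * t j| ≤ C := by
  calc |∑ i, ∑ j, s i * N i j * t j| ≤ ∑ i, |∑ j, s i * N i j * t j| :=
        Finset.abs_sum_le_sum_abs _ _
    _ ≤ ∑ i, ∑ j, |s i * N i j * t j| :=
        Finset.sum_le_sum fun i _ => Finset.abs_sum_le_sum_abs _ _
    _ ≤ ∑ i, ∑ j, s i * C * t j := by
        refine Finset.sum_le_sum fun i _ => Finset.sum_le_sum fun j _ => ?_
        rw [abs_mul, abs_mul, abs_of_nonneg (hs.1 i), abs_of_nonneg (ht.1 j)]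
        exact mul_le_mul_of_nonneg_right
          (mul_le_mul_of_nonneg_right (hC i j) (ht.1 j)) (hs.1 i) |>.trans_eq (by ring) |>.trans_eq' (by ring)
    _ = C := by
        simp only [← Finset.sum_mul, ← Finset.mul_sum, ht.2, hs.2]
        ring

lemma abs_matrixValue_le [Nonempty I] [Nonempty J] {N : I → J → ℝ} {C : ℝ}
    (hC : ∀ i j, |N i j| ≤ C) : |matrixValue N| ≤ C := by
  classical
  have hne : Nonempty (stdSimplex ℝ I) :=
    ⟨⟨Pi.single (Classical.arbitrary I) 1, single_mem_stdSimplex ℝ _⟩⟩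
  have hneJ : Nonempty (stdSimplex ℝ J) :=
    ⟨⟨Pi.single (Classical.arbitrary J) 1, single_mem_stdSimplex ℝ _⟩⟩
  have hbddS : ∀ t : stdSimplex ℝ J, BddAbove (Set.range fun s : stdSimplex ℝ I =>
      ∑ i, ∑ j, (s : I → ℝ) i * N i j * (t : J → ℝ) j) := by
    intro t
    refine ⟨C, ?_⟩
    rintro y ⟨s, rfl⟩
    exact (abs_le.mp (abs_pairing_le hC s.2 t.2)).2
  have hsup_le : ∀ t : stdSimplex ℝ J, (⨆ s : stdSimplex ℝ I,
      ∑ i, ∑ j, (s : I → ℝ) i * N i j * (t : J → ℝ) j) ≤ C := fun t =>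
    ciSup_le fun s => (abs_le.mp (abs_pairing_le hC s.2 t.2)).2
  have hsup_ge : ∀ t : stdSimplex ℝ J, -C ≤ (⨆ s : stdSimplex ℝ I,
      ∑ i, ∑ j, (s : I → ℝ) i * N i j * (t : J → ℝ) j) := by
    intro t
    obtain ⟨s⟩ := hne
    exact le_trans (abs_le.mp (abs_pairing_le hC s.2 t.2)).1 (le_ciSup (hbddS t) s)
  rw [abs_le]
  constructor
  · exact le_ciInf hsup_ge
  · obtain ⟨t⟩ := hneJ
    exact le_trans (ciInf_le ⟨-C, by rintro y ⟨t', rfl⟩; exact hsup_ge t'⟩ t) (hsup_le t)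

/-- Uniform bound on `ve` over the simplex. -/
lemma abs_ve_le [Nonempty I] [Nonempty J] (M : K → I → J → ℝ) {q : K → ℝ}
    (hq : q ∈ stdSimplex ℝ K) :
    |ve M q| ≤ ∑ k, ∑ i, ∑ j, |M k i j| := by
  apply abs_matrixValue_le
  intro i j
  calc |∑ k, q k * M k i j| ≤ ∑ k, |q k * M k i j| := Finset.abs_sum_le_sum_abs _ _
    _ ≤ ∑ k, |M k i j| := by
        refine Finset.sum_le_sum fun k _ => ?_
        rw [abs_mul, abs_of_nonneg (hq.1 k)]
        have h1 : q k ≤ 1 := by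
          rw [← hq.2]
          exact Finset.single_le_sum (fun k' _ => hq.1 k') (Finset.mem_univ k)
        nlinarith [abs_nonneg (M k i j), hq.1 k]
    _ ≤ ∑ k, ∑ i', ∑ j', |M k i' j'| := by
        refine Finset.sum_le_sum fun k _ => ?_
        calc |M k i j| ≤ ∑ j', |M k i j'| :=
              Finset.single_le_sum (f := fun j' => |M k i j'|)
                (fun j' _ => abs_nonneg _) (Finset.mem_univ j)
          _ ≤ ∑ i', ∑ j', |M k i' j'| :=
              Finset.single_le_sum (f := fun i' => ∑ j', |M k i' j'|)
                (fun i' _ => Finset.sum_nonneg fun j' _ => abs_nonneg _) (Finset.mem_univ i)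

lemma abs_dot_le {K : Type*} [Fintype K] (φ : K → ℝ) {q : K → ℝ}
    (hq : q ∈ stdSimplex ℝ K) : |∑ k, φ k * q k| ≤ ∑ k, |φ k| := by
  calc |∑ k, φ k * q k| ≤ ∑ k, |φ k * q k| := Finset.abs_sum_le_sum_abs _ _
    _ ≤ ∑ k, |φ k| := by
        refine Finset.sum_le_sum fun k _ => ?_
        rw [abs_mul, abs_of_nonneg (hq.1 k)]
        have h1 : q k ≤ 1 := by
          rw [← hq.2]
          exact Finset.single_le_sum (fun k' _ => hq.1 k') (Finset.mem_univ k)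
        nlinarith [abs_nonneg (φ k), hq.1 k]

section main
variable {KA KB IA JA IB JB : Type*} [Fintype KA] [Fintype KB]
    [Fintype IA] [Fintype JA] [Fintype IB] [Fintype JB]
    [Nonempty IA] [Nonempty JA] [Nonempty IB] [Nonempty JB]

omit [Nonempty IA] [Nonempty JA] [Nonempty IB] [Nonempty JB] in
lemma part_a (A : KA → IA → JA → ℝ) (B : KB → IB → JB → ℝ) (p0 : KA × KB → ℝ) :
    (NRset A (margA p0)) ×ˢ (NRset B (margB p0)) ⊆ bigNR A B p0 := by
  rintro ⟨φ1, φ2⟩ ⟨⟨h1v, h1e, h1F⟩, ⟨h2v, h2e, h2F⟩⟩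
  refine ⟨⟨h1F, h2F⟩, ?_, le_of_eq h1e, le_of_eq h2e⟩
  intro q hq _
  rw [sum_prod_split]
  exact add_le_add (h1v _ (margA_mem hq)) (h2v _ (margB_mem hq))

theorem stmt_18_aux (A : KA → IA → JA → ℝ) (B : KB → IB → JB → ℝ)
    (p0 : KA × KB → ℝ) (hp0 : p0 ∈ stdSimplex ℝ (KA × KB)) :
    ((NRset A (margA p0)) ×ˢ (NRset B (margB p0)) ⊆ bigNR A B p0) ∧
    ((∀ k, 0 < p0 k) → bigNR A B p0 = (NRset A (margA p0)) ×ˢ (NRset B (margB p0))) := by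
  refine ⟨part_a A B p0, fun hfull => ?_⟩
  refine Set.Subset.antisymm ?_ (part_a A B p0)
  rintro ⟨φ1, φ2⟩ ⟨⟨hF1, hF2⟩, hIR, hc1, hc2⟩
  have hpA : margA p0 ∈ stdSimplex ℝ KA := margA_mem hp0
  have hpB : margB p0 ∈ stdSimplex ℝ KB := margB_mem hp0
  -- product distributions
  have hstar : ∀ qA ∈ stdSimplex ℝ KA, ∀ qB ∈ stdSimplex ℝ KB,
      ve A qA + ve B qB ≤ (∑ a, φ1 a * qA a) + (∑ b, φ2 b * qB b) := by
    intro qA hqA qB hqB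
    set q : KA × KB → ℝ := fun k => qA k.1 * qB k.2 with hqdef
    have hq : q ∈ stdSimplex ℝ (KA × KB) := by
      refine ⟨fun k => mul_nonneg (hqA.1 k.1) (hqB.1 k.2), ?_⟩
      rw [Fintype.sum_prod_type]
      simp only [hqdef, ← Finset.mul_sum, hqB.2, mul_one]
      exact hqA.2
    have hmA : margA q = qA := by
      funext a
      simp only [margA, hqdef, ← Finset.mul_sum, hqB.2, mul_one]
    have hmB : margB q = qB := by
      funext b
      simp only [margB, hqdef, ← Finset.sum_mul, hqA.2, one_mul]
    have := hIR q hq (fun k hk => absurd hk (hfull k).ne')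
    rwa [hmA, hmB, sum_prod_split, hmA, hmB] at this
  -- boundedness of the gap sets
  have hboundA : ∀ x ∈ (fun qA => ve A qA - ∑ a, φ1 a * qA a) '' stdSimplex ℝ KA,
      x ≤ (∑ k, ∑ i, ∑ j, |A k i j|) + ∑ a, |φ1 a| := by
    rintro x ⟨qA, hqA, rfl⟩
    dsimp only
    have h1 := (abs_le.mp (abs_ve_le A hqA)).2
    have h2 := (abs_le.mp (abs_dot_le φ1 hqA)).1
    linarith
  have hboundB : ∀ x ∈ (fun qB => ve B qB - ∑ b, φ2 b * qB b) '' stdSimplex ℝ KB,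
      x ≤ (∑ k, ∑ i, ∑ j, |B k i j|) + ∑ b, |φ2 b| := by
    rintro x ⟨qB, hqB, rfl⟩
    dsimp only
    have h1 := (abs_le.mp (abs_ve_le B hqB)).2
    have h2 := (abs_le.mp (abs_dot_le φ2 hqB)).1
    linarith
  set cA := sSup ((fun qA => ve A qA - ∑ a, φ1 a * qA a) '' stdSimplex ℝ KA) with hcA
  set cB := sSup ((fun qB => ve B qB - ∑ b, φ2 b * qB b) '' stdSimplex ℝ KB) with hcB
  have hneA : ((fun qA => ve A qA - ∑ a, φ1 a * qA a) '' stdSimplex ℝ KA).Nonempty :=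
    ⟨_, ⟨margA p0, hpA, rfl⟩⟩
  have hneB : ((fun qB => ve B qB - ∑ b, φ2 b * qB b) '' stdSimplex ℝ KB).Nonempty :=
    ⟨_, ⟨margB p0, hpB, rfl⟩⟩
  have hbA : BddAbove ((fun qA => ve A qA - ∑ a, φ1 a * qA a) '' stdSimplex ℝ KA) :=
    ⟨_, hboundA⟩
  have hbB : BddAbove ((fun qB => ve B qB - ∑ b, φ2 b * qB b) '' stdSimplex ℝ KB) :=
    ⟨_, hboundB⟩
  -- cA ≥ 0 and cB ≥ 0
  have hcavA : cav (ve A) (margA p0) ≤ (∑ a, φ1 a * margA p0 a) + cA :=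
    cav_le_affine (ve A) φ1 cA hpA fun qA hqA => by
      have := le_csSup hbA ⟨qA, hqA, rfl⟩
      dsimp only at this
      linarith
  have hcavB : cav (ve B) (margB p0) ≤ (∑ b, φ2 b * margB p0 b) + cB :=
    cav_le_affine (ve B) φ2 cB hpB fun qB hqB => by
      have := le_csSup hbB ⟨qB, hqB, rfl⟩
      dsimp only at this
      linarith
  have hcA0 : 0 ≤ cA := by linarith
  have hcB0 : 0 ≤ cB := by linarith
  -- majorization
  have hmajA : ∀ qA ∈ stdSimplex ℝ KA, ve A qA ≤ ∑ a, φ1 a * qA a := by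
    intro qA hqA
    have : cB ≤ (∑ a, φ1 a * qA a) - ve A qA := by
      refine csSup_le hneB ?_
      rintro x ⟨qB, hqB, rfl⟩
      dsimp only
      have := hstar qA hqA qB hqB
      linarith
    linarith
  have hmajB : ∀ qB ∈ stdSimplex ℝ KB, ve B qB ≤ ∑ b, φ2 b * qB b := by
    intro qB hqB
    have : cA ≤ (∑ b, φ2 b * qB b) - ve B qB := by
      refine csSup_le hneA ?_
      rintro x ⟨qA, hqA, rfl⟩
      dsimp only
      have := hstar qA hqA qB hqB
      linarith
    linarith
  -- equalities at p0
  have heqA : (∑ a, φ1 a * margA p0 a) = cav (ve A) (margA p0) := by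
    refine le_antisymm hc1 ?_
    have := cav_le_affine (ve A) φ1 0 hpA fun qA hqA => by
      rw [add_zero]; exact hmajA qA hqA
    linarith
  have heqB : (∑ b, φ2 b * margB p0 b) = cav (ve B) (margB p0) := by
    refine le_antisymm hc2 ?_
    have := cav_le_affine (ve B) φ2 0 hpB fun qB hqB => by
      rw [add_zero]; exact hmajB qB hqB
    linarith
  exact ⟨⟨hmajA, heqA, hF1⟩, ⟨hmajB, heqB, hF2⟩⟩

end main

end helperlemmas

/-- (a) `NR_A(p⁰_A) × NR_B(p⁰_B) ⊆ 𝒩ℛ(p⁰)` for every `p⁰ ∈ Δ(K_A×K_B)`;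
(b) if `p⁰` has full support, then `𝒩ℛ(p⁰) = NR_A(p⁰_A) × NR_B(p⁰_B)`. -/
theorem stmt_18 {KA KB IA JA IB JB : Type*} [Fintype KA] [Fintype KB]
    [Fintype IA] [Fintype JA] [Fintype IB] [Fintype JB]
    [Nonempty IA] [Nonempty JA] [Nonempty IB] [Nonempty JB]
    (A : KA → IA → JA → ℝ) (B : KB → IB → JB → ℝ)
    (p0 : KA × KB → ℝ) (hp0 : p0 ∈ stdSimplex ℝ (KA × KB)) :
    ((NRset A (margA p0)) ×ˢ (NRset B (margB p0)) ⊆ bigNR A B p0) ∧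
    ((∀ k, 0 < p0 k) → bigNR A B p0 = (NRset A (margA p0)) ×ˢ (NRset B (margB p0))) := by
  exact stmt_18_aux A B p0 hp0
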